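/- arXiv:1903.04179 — 2 statements merged into one kernel-verified Lean document; each statement's English description precedes it below -/
import Mathlib

section
/- Let E be a Riesz space and x, y ∈ E. Then x ⊑ y if and only if x⁺ ⊑ y⁺ and x⁻ ⊑ y⁻. -/
/-- In a Riesz space, `y` is a fragment of `x` (notation `y ⊑ x`) if `|y| ⊓ |x - y| = 0`. -/
def Fragment {E : Type*} [Lattice E] [AddCommGroup E] (y x : E) : Prop :=
  |y| ⊓ |x - y| = 0

section Aux
variable {E : Type*} [Lattice E] [AddCommGroup E]
  [CovariantClass E E (· + ·) (· ≤ ·)] {a b c p q r s : E}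

private lemma aux_inf_add_le (ha : 0 ≤ a) (hb : 0 ≤ b) (hc : 0 ≤ c) :
    a ⊓ (b + c) ≤ a ⊓ b + a ⊓ c := by
  rw [← sub_le_iff_le_add']
  have : a ⊓ (b + c) - a ⊓ b = (a ⊓ (b + c) - a) ⊔ (a ⊓ (b + c) - b) := by
    rw [sub_inf]
  rw [this]
  apply sup_le
  · exact le_trans (sub_nonpos.2 inf_le_left) (le_inf ha hc)
  · exact le_inf (le_trans (sub_le_sub_right inf_le_left b) (sub_le_self a hb))
      (le_trans (sub_le_sub_right inf_le_right b) (by simp))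

private lemma aux_inf4 (hp : 0 ≤ p) (hq : 0 ≤ q) (hr : 0 ≤ r) (hs : 0 ≤ s)
    (hpr : p ⊓ r = 0) (hps : p ⊓ s = 0) (hqr : q ⊓ r = 0) (hqs : q ⊓ s = 0) :
    (p + q) ⊓ (r + s) = 0 := by
  have hpq : 0 ≤ p + q := add_nonneg hp hq
  apply le_antisymm
  · calc (p + q) ⊓ (r + s) ≤ (p + q) ⊓ r + (p + q) ⊓ s := aux_inf_add_le hpq hr hs
    _ ≤ (p ⊓ r + q ⊓ r) + (p ⊓ s + q ⊓ s) := by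
        refine add_le_add ?_ ?_
        · rw [inf_comm]
          exact le_trans (aux_inf_add_le hr hp hq) (by rw [inf_comm r p, inf_comm r q])
        · rw [inf_comm]
          exact le_trans (aux_inf_add_le hs hp hq) (by rw [inf_comm s p, inf_comm s q])
    _ = 0 := by rw [hpr, hps, hqr, hqs]; simp
  · exact le_inf hpq (add_nonneg hr hs)

private lemma aux_posPart (hp : 0 ≤ p) (hq : 0 ≤ q) (hpq : p ⊓ q = 0) :
    (p - q) ⊔ 0 = p := by
  have h1 : (p - q) ⊔ 0 = (p ⊔ q) - q := by
    rw [eq_sub_iff_add_eq, sup_add, sub_add_cancel, zero_add]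
  have h2 : p ⊔ q = p + q := by
    have := inf_add_sup p q
    rw [hpq, zero_add] at this
    exact this
  rw [h1, h2, add_sub_cancel_right]

private lemma aux_negPart (hp : 0 ≤ p) (hq : 0 ≤ q) (hpq : p ⊓ q = 0) :
    (-(p - q)) ⊔ 0 = q := by
  rw [neg_sub]
  exact aux_posPart hq hp (by rw [inf_comm]; exact hpq)

end Aux

/-- In a Riesz space `E`, for `x y ∈ E` one has `x ⊑ y` if and only if
`x⁺ ⊑ y⁺` and `x⁻ ⊑ y⁻`, where `x⁺ = x ⊔ 0` and `x⁻ = (-x) ⊔ 0`. -/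
theorem fragment_iff_posPart_negPart {E : Type*} [Lattice E] [AddCommGroup E]
    [CovariantClass E E (· + ·) (· ≤ ·)] [Module ℝ E] [PosSMulMono ℝ E] (x y : E) :
    Fragment x y ↔ Fragment (x ⊔ 0) (y ⊔ 0) ∧ Fragment (-x ⊔ 0) (-y ⊔ 0) := by
  have hpd : ∀ a : E, a⁺ = a ⊔ 0 := fun a => posPart_def a
  have hnd : ∀ a : E, a⁻ = -a ⊔ 0 := fun a => negPart_def a
  have ppabs : ∀ a : E, a⁺ ≤ |a| := fun a => by
    rw [hpd]; exact sup_le (le_abs_self a) (abs_nonneg a)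
  have npabs : ∀ a : E, a⁻ ≤ |a| := fun a => by
    rw [hnd]; exact sup_le (neg_le_abs a) (abs_nonneg a)
  constructor
  · intro h
    replace h : |x| ⊓ |y - x| = 0 := h
    set b := y - x with hb
    have cross : ∀ u v : E, u ≤ |x| → v ≤ |b| → 0 ≤ u → 0 ≤ v → u ⊓ v = 0 := by
      intro u v hu hv hu0 hv0
      exact le_antisymm (le_trans (inf_le_inf hu hv) h.le) (le_inf hu0 hv0)
    have hxb_pp : x⁺ ⊓ b⁺ = 0 := cross _ _ (ppabs x) (ppabs b)
      (posPart_nonneg x) (posPart_nonneg b)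
    have hxb_pn : x⁺ ⊓ b⁻ = 0 := cross _ _ (ppabs x) (npabs b)
      (posPart_nonneg x) (negPart_nonneg b)
    have hxb_np : x⁻ ⊓ b⁺ = 0 := cross _ _ (npabs x) (ppabs b)
      (negPart_nonneg x) (posPart_nonneg b)
    have hxb_nn : x⁻ ⊓ b⁻ = 0 := cross _ _ (npabs x) (npabs b)
      (negPart_nonneg x) (negPart_nonneg b)
    have hP : 0 ≤ x⁺ + b⁺ := add_nonneg (posPart_nonneg x) (posPart_nonneg b)
    have hQ : 0 ≤ x⁻ + b⁻ := add_nonneg (negPart_nonneg x) (negPart_nonneg b)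
    have hPQ : (x⁺ + b⁺) ⊓ (x⁻ + b⁻) = 0 :=
      aux_inf4 (posPart_nonneg x) (posPart_nonneg b) (negPart_nonneg x) (negPart_nonneg b)
        (posPart_inf_negPart_eq_zero x) hxb_pn
        (by rw [inf_comm]; exact hxb_np) (posPart_inf_negPart_eq_zero b)
    have hy : y = (x⁺ + b⁺) - (x⁻ + b⁻) := by
      have h1 : (x⁺ + b⁺) - (x⁻ + b⁻) = (x⁺ - x⁻) + (b⁺ - b⁻) := by abel
      rw [h1, posPart_sub_negPart, posPart_sub_negPart, hb]
      abel
    have hyp : y⁺ = x⁺ + b⁺ := by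
      rw [hpd, hy]; exact aux_posPart hP hQ hPQ
    have hyn : y⁻ = x⁻ + b⁻ := by
      rw [hnd, hy]; exact aux_negPart hP hQ hPQ
    constructor
    · show |x ⊔ 0| ⊓ |(y ⊔ 0) - (x ⊔ 0)| = 0
      rw [← hpd, ← hpd]
      have h1 : y⁺ - x⁺ = b⁺ := by rw [hyp]; abel
      rw [h1, abs_of_nonneg (posPart_nonneg x), abs_of_nonneg (posPart_nonneg b)]
      exact hxb_pp
    · show |(-x) ⊔ 0| ⊓ |((-y) ⊔ 0) - ((-x) ⊔ 0)| = 0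
      rw [← hnd, ← hnd]
      have h1 : y⁻ - x⁻ = b⁻ := by rw [hyn]; abel
      rw [h1, abs_of_nonneg (negPart_nonneg x), abs_of_nonneg (negPart_nonneg b)]
      exact hxb_nn
  · rintro ⟨h1, h2⟩
    replace h1 : |x ⊔ 0| ⊓ |(y ⊔ 0) - (x ⊔ 0)| = 0 := h1
    replace h2 : |(-x) ⊔ 0| ⊓ |(-y ⊔ 0) - ((-x) ⊔ 0)| = 0 := h2
    rw [← hpd x, ← hpd y] at h1
    rw [← hnd x, ← hnd y] at h2
    rw [abs_of_nonneg (posPart_nonneg x)] at h1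
    rw [abs_of_nonneg (negPart_nonneg x)] at h2
    -- h1 : x⁺ ⊓ |y⁺ - x⁺| = 0, h2 : x⁻ ⊓ |y⁻ - x⁻| = 0
    have hbnn : 0 ≤ y⁺ - x⁺ := by
      rw [← negPart_eq_zero]
      have hle : (y⁺ - x⁺)⁻ ≤ x⁺ ⊓ |y⁺ - x⁺| := by
        refine le_inf ?_ (npabs _)
        rw [hnd, neg_sub]
        exact sup_le (sub_le_self _ (posPart_nonneg y)) (posPart_nonneg x)
      exact le_antisymm (hle.trans h1.le) (negPart_nonneg _)
    have hcnn : 0 ≤ y⁻ - x⁻ := by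
      rw [← negPart_eq_zero]
      have hle : (y⁻ - x⁻)⁻ ≤ x⁻ ⊓ |y⁻ - x⁻| := by
        refine le_inf ?_ (npabs _)
        rw [hnd, neg_sub]
        exact sup_le (sub_le_self _ (negPart_nonneg y)) (negPart_nonneg x)
      exact le_antisymm (hle.trans h2.le) (negPart_nonneg _)
    have h1'' : x⁺ ⊓ (y⁺ - x⁺) = 0 := by rw [← abs_of_nonneg hbnn]; exact h1
    have h2'' : x⁻ ⊓ (y⁻ - x⁻) = 0 := by rw [← abs_of_nonneg hcnn]; exact h2
    have hxp_le : x⁺ ≤ y⁺ := sub_nonneg.1 hbnn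
    have hxn_le : x⁻ ≤ y⁻ := sub_nonneg.1 hcnn
    show |x| ⊓ |y - x| = 0
    have habs_x : |x| = x⁺ + x⁻ := (posPart_add_negPart x).symm
    have hyx : y - x = (y⁺ - x⁺) - (y⁻ - x⁻) := by
      have h3 : (y⁺ - x⁺) - (y⁻ - x⁻) = (y⁺ - y⁻) - (x⁺ - x⁻) := by abel
      rw [h3, posPart_sub_negPart, posPart_sub_negPart]
    have habs_yx : |y - x| ≤ (y⁺ - x⁺) + (y⁻ - x⁻) := by
      rw [hyx]
      refine abs_le'.2 ⟨?_, ?_⟩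
      · have : y⁺ - x⁺ ≤ (y⁺ - x⁺) + (y⁻ - x⁻) := le_add_of_nonneg_right hcnn
        exact le_trans (sub_le_self _ hcnn) this
      · rw [neg_sub]
        have : y⁻ - x⁻ ≤ (y⁺ - x⁺) + (y⁻ - x⁻) := le_add_of_nonneg_left hbnn
        exact le_trans (sub_le_self _ hbnn) this
    have key : (x⁺ + x⁻) ⊓ ((y⁺ - x⁺) + (y⁻ - x⁻)) = 0 := by
      refine aux_inf4 (posPart_nonneg x) (negPart_nonneg x) hbnn hcnn h1'' ?_ ?_ h2''
      · exact le_antisymm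
          (le_trans (inf_le_inf hxp_le (sub_le_self _ (negPart_nonneg x)))
            (posPart_inf_negPart_eq_zero y).le)
          (le_inf (posPart_nonneg x) hcnn)
      · refine le_antisymm ?_ (le_inf (negPart_nonneg x) hbnn)
        rw [inf_comm]
        exact le_trans (inf_le_inf (sub_le_self _ (posPart_nonneg x)) hxn_le)
          (posPart_inf_negPart_eq_zero y).le
    refine le_antisymm ?_ (le_inf (abs_nonneg x) (abs_nonneg (y - x)))
    calc |x| ⊓ |y - x| ≤ (x⁺ + x⁻) ⊓ ((y⁺ - x⁺) + (y⁻ - x⁻)) :=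
          inf_le_inf habs_x.le habs_yx
      _ = 0 := key
end

section
/- Let E be a KB-space, i.e., a Banach lattice in which every increasing norm-bounded sequence of positive elements is norm convergent. Then every norm bounded laterally Cauchy sequence (x_n) in E (meaning sup_n ‖x_n‖ < ∞ and x_n ⊑ x_m for all n ≤ m) laterally norm converges: there exists x ∈ E with x_n ⊑ x for all n and ‖x_n − x‖ → 0. -/
/-!
If `x n ⊑ x m` for `n ≤ m`, then `|x m| = |x n| + |x m - x n|`, so `|x n|` increases and
`‖x m - x n‖ = ‖|x m| - |x n|‖`. In a KB-space the bounded increasing sequence `|x n|` converges,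
hence `x` is Cauchy and has a limit `l`; `x n ⊑ l` because being a fragment is a closed condition.
-/

open Filter

section LatticeOrderedGroup

variable {E : Type*} [Lattice E] [AddCommGroup E] [IsOrderedAddMonoid E]

theorem abs_add_eq_add_abs_of_abs_inf_abs_eq_zero {a b : E} (h : |a| ⊓ |b| = 0) :
    |a + b| = |a| + |b| := by
  refine le_antisymm (abs_add_le a b) ?_
  calc |a| + |b| = |a| ⊔ |b| := by rw [← inf_add_sup, h, zero_add]
    _ = |(|b| - |a|)| := by rw [← sup_sub_inf_eq_abs_sub, h, sub_zero]
    _ = |(|a| - |-b|)| := by rw [abs_neg, abs_sub_comm]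
    _ ≤ |a - -b| := abs_abs_sub_abs_le a (-b)
    _ = |a + b| := by rw [sub_neg_eq_add]

namespace Fragment

theorem abs_eq_add_abs_sub {x y : E} (h : Fragment y x) : |x| = |y| + |x - y| := by
  rw [← abs_add_eq_add_abs_of_abs_inf_abs_eq_zero h, add_sub_cancel]

theorem abs_le_abs {x y : E} (h : Fragment y x) : |y| ≤ |x| := by
  rw [h.abs_eq_add_abs_sub]
  exact le_add_of_nonneg_right (abs_nonneg _)

end Fragment

def LaterallyCauchy {ι : Type*} [Preorder ι] (x : ι → E) : Prop :=
  ∀ i j, i ≤ j → Fragment (x i) (x j)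

theorem LaterallyCauchy.monotone_abs {ι : Type*} [Preorder ι] {x : ι → E}
    (hx : LaterallyCauchy x) : Monotone fun i => |x i| :=
  fun i j hij => (hx i j hij).abs_le_abs

end LatticeOrderedGroup

section NormedLatticeAddCommGroup

variable {E : Type*} [NormedAddCommGroup E] [Lattice E] [HasSolidNorm E] [IsOrderedAddMonoid E]

theorem Fragment.norm_sub_eq_norm_abs_sub_abs {x y : E} (h : Fragment y x) :
    ‖x - y‖ = ‖|x| - |y|‖ := by
  rw [h.abs_eq_add_abs_sub, add_sub_cancel_left, norm_abs_eq_norm]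

theorem isClosed_setOf_fragment (y : E) : IsClosed {x : E | Fragment y x} := by
  have hsub : Continuous fun x : E => x - y := continuous_id.sub continuous_const
  exact isClosed_eq (continuous_const.inf (hsub.sup hsub.neg)) continuous_const

variable {ι : Type*} {x : ι → E}

theorem LaterallyCauchy.cauchySeq [Nonempty ι] [SemilatticeSup ι] (hx : LaterallyCauchy x)
    (habs : CauchySeq fun i => |x i|) : CauchySeq x := by
  rw [Metric.cauchySeq_iff'] at habs ⊢
  intro ε hε
  obtain ⟨N, hN⟩ := habs ε hε
  refine ⟨N, fun n hn => ?_⟩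
  rw [dist_eq_norm, (hx N n hn).norm_sub_eq_norm_abs_sub_abs, ← dist_eq_norm]
  exact hN n hn

theorem LaterallyCauchy.fragment_of_tendsto [Preorder ι] [(atTop : Filter ι).NeBot]
    (hx : LaterallyCauchy x) {l : E} (hl : Tendsto x atTop (nhds l)) (i : ι) :
    Fragment (x i) l :=
  (isClosed_setOf_fragment (x i)).mem_of_tendsto hl
    ((eventually_ge_atTop i).mono fun _ hj => hx i _ hj)

end NormedLatticeAddCommGroup

theorem latCauchy_latn_of_KB_general {E : Type*} [NormedAddCommGroup E] [Lattice E]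
    [HasSolidNorm E] [IsOrderedAddMonoid E]
    [CompleteSpace E]
    (hKB : ∀ y : ℕ → E, Monotone y → (∀ n, 0 ≤ y n) → (∃ C : ℝ, ∀ n, ‖y n‖ ≤ C) →
      ∃ l : E, Tendsto y atTop (nhds l))
    (x : ℕ → E) (hbdd : ∃ C : ℝ, ∀ n, ‖x n‖ ≤ C)
    (hlatCauchy : ∀ n m, n ≤ m → Fragment (x n) (x m)) :
    ∃ l : E, (∀ n, Fragment (x n) l) ∧
      Tendsto (fun n => ‖x n - l‖) atTop (nhds 0) := by
  have hx : LaterallyCauchy x := hlatCauchy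
  obtain ⟨C, hC⟩ := hbdd
  obtain ⟨a, ha⟩ := hKB (fun n => |x n|) hx.monotone_abs (fun n => abs_nonneg (x n))
    ⟨C, fun n => (norm_abs_eq_norm (x n)).trans_le (hC n)⟩
  obtain ⟨l, hl⟩ := cauchySeq_tendsto_of_complete (hx.cauchySeq ha.cauchySeq)
  exact ⟨l, hx.fragment_of_tendsto hl, tendsto_iff_norm_sub_tendsto_zero.mp hl⟩

/-- In a KB-space (a Banach lattice in which every increasing norm-bounded sequence
of positive elements is norm convergent), every norm bounded laterally Cauchy
sequence laterally norm converges. -/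
theorem latCauchy_latn_of_KB {E : Type*} [NormedAddCommGroup E] [Lattice E]
    [HasSolidNorm E] [IsOrderedAddMonoid E]
    [NormedSpace ℝ E] [CompleteSpace E]
    (hKB : ∀ y : ℕ → E, Monotone y → (∀ n, 0 ≤ y n) → (∃ C : ℝ, ∀ n, ‖y n‖ ≤ C) →
      ∃ l : E, Tendsto y atTop (nhds l))
    (x : ℕ → E) (hbdd : ∃ C : ℝ, ∀ n, ‖x n‖ ≤ C)
    (hlatCauchy : ∀ n m, n ≤ m → Fragment (x n) (x m)) :
    ∃ l : E, (∀ n, Fragment (x n) l) ∧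
      Tendsto (fun n => ‖x n - l‖) atTop (nhds 0) :=
  latCauchy_latn_of_KB_general hKB x hbdd hlatCauchy
end
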